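/- Let θ ∈ (0, π/2) and β ≥ 0 be fixed. Then the query exponent ρ_q(c, θ, β) = [log(1 − (1−c)·(1 + β² − 2β·cos θ)/sin²θ) − log(1 − (1−c)·β²)]/log(c) tends to (1 − β·cos θ)²/sin²θ as c → 1 from below. I.e., in the sparse-data limit n^{1/d} → 1 the spherical filter query exponent converges to (1 − β·cos θ)²/sin²θ. -/

import Mathlib

open Real Filter

/-- The query exponent of the spherical locality-sensitive filter data structure. -/
noncomputable def rhoQ (c θ β : ℝ) : ℝ :=
  (Real.log (1 - (1 - c) * (1 + β ^ 2 - 2 * β * Real.cos θ) / Real.sin θ ^ 2) -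
    Real.log (1 - (1 - c) * β ^ 2)) / Real.log c

lemma slope_log_one :
    Tendsto (fun x : ℝ => Real.log x / (x - 1)) (nhdsWithin 1 {(1:ℝ)}ᶜ) (nhds 1) := by
  have h := hasDerivAt_iff_tendsto_slope.mp (Real.hasDerivAt_log one_ne_zero)
  rw [inv_one] at h
  refine h.congr fun x => ?_
  simp [slope_def_field]

lemma aux_limit (k : ℝ) (hk : 0 ≤ k) :
    Tendsto (fun c : ℝ => Real.log (1 - (1 - c) * k) / Real.log c)
      (nhdsWithin 1 (Set.Iio 1)) (nhds k) := by
  rcases hk.eq_or_lt with h | h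
  · subst h
    simpa using tendsto_const_nhds (x := (0:ℝ))
  · -- k > 0
    have h2 : Tendsto (fun c : ℝ => 1 + (c - 1) * k) (nhdsWithin 1 (Set.Iio 1))
        (nhdsWithin 1 {(1:ℝ)}ᶜ) := by
      apply tendsto_nhdsWithin_of_tendsto_nhds_of_eventually_within
      · have : Continuous fun c : ℝ => 1 + (c - 1) * k := by continuity
        have := this.tendsto 1
        simpa using this.mono_left nhdsWithin_le_nhds
      · filter_upwards [self_mem_nhdsWithin] with c hc
        have : (c - 1) * k < 0 := mul_neg_of_neg_of_pos (by simpa using hc) h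
        simp only [Set.mem_compl_iff, Set.mem_singleton_iff]
        nlinarith
    have h1 : Tendsto (fun c : ℝ => Real.log (1 + (c - 1) * k) / ((1 + (c - 1) * k) - 1))
        (nhdsWithin 1 (Set.Iio 1)) (nhds 1) := slope_log_one.comp h2
    have h3 : Tendsto (fun c : ℝ => (c - 1) / Real.log c) (nhdsWithin 1 (Set.Iio 1))
        (nhds 1) := by
      have := (slope_log_one.mono_left
        (nhdsWithin_mono _ (s := Set.Iio (1:ℝ)) (fun x hx => ne_of_lt hx))).inv₀ one_ne_zero
      simpa [inv_div] using this
    have hmul := (h1.mul h3).mul (tendsto_const_nhds (x := k))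
    rw [one_mul, one_mul] at hmul
    refine hmul.congr' ?_
    have hmem : Set.Ioo (0:ℝ) 1 ∈ nhdsWithin (1:ℝ) (Set.Iio 1) := by
      rw [nhdsWithin, Filter.mem_inf_iff]
      exact ⟨Set.Ioi 0, Ioi_mem_nhds one_pos, Set.Iio 1, mem_principal_self _,
        by rw [Set.Ioi_inter_Iio]⟩
    filter_upwards [hmem] with c hc
    have hc0 : (0:ℝ) < c := hc.1
    have hc1 : c < 1 := hc.2
    have hlog : Real.log c ≠ 0 := by
      have := Real.log_neg hc0 hc1
      linarith
    have hck : (c - 1) * k ≠ 0 := by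
      have : (c - 1) * k < 0 := mul_neg_of_neg_of_pos (by linarith) h
      linarith
    have heq : 1 - (1 - c) * k = 1 + (c - 1) * k := by ring
    rw [heq]
    field_simp
    rw [show 1 + (c - 1) * k - 1 = (c - 1) * k by ring]
    exact mul_div_cancel_left₀ _ hck

theorem query_exponent_sparse_limit (θ β : ℝ) (hθ : θ ∈ Set.Ioo 0 (π / 2))
    (hβ : 0 ≤ β) :
    Tendsto (fun c : ℝ => rhoQ c θ β) (nhdsWithin 1 (Set.Iio 1))
      (nhds ((1 - β * Real.cos θ) ^ 2 / Real.sin θ ^ 2)) := by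
  have hs : 0 < Real.sin θ := Real.sin_pos_of_pos_of_lt_pi hθ.1 (by linarith [hθ.2, Real.pi_pos])
  have hs2 : Real.sin θ ^ 2 ≠ 0 := by positivity
  set A : ℝ := (1 + β ^ 2 - 2 * β * Real.cos θ) / Real.sin θ ^ 2 with hA
  have hAnn : 0 ≤ A := by
    apply div_nonneg _ (by positivity)
    have hcos : Real.cos θ ≤ 1 := Real.cos_le_one θ
    nlinarith [sq_nonneg (1 - β), mul_nonneg hβ (sub_nonneg.2 hcos)]
  have hB : (0:ℝ) ≤ β ^ 2 := by positivity
  have key := (aux_limit A hAnn).sub (aux_limit (β ^ 2) hB)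
  have heq : A - β ^ 2 = (1 - β * Real.cos θ) ^ 2 / Real.sin θ ^ 2 := by
    rw [hA]
    have hsin : Real.sin θ ^ 2 = 1 - Real.cos θ ^ 2 := Real.sin_sq θ
    field_simp
    nlinarith [Real.sin_sq_add_cos_sq θ]
  rw [heq] at key
  refine key.congr (fun c => ?_)
  unfold rhoQ
  rw [sub_div, hA, ← mul_div_assoc]
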